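/- arXiv:1811.02763 — 3 statements merged into one kernel-verified Lean document; each statement's English description precedes it below -/
import Mathlib

section
/- In the fixed-point subalgebra of sl_3[t,t^{-1}] under θ₁, the elements 𝐞_i = A_{i,i+1}^{(0)} for i=1,2 and 𝐞_3 = A_{1,3}^{(-1)} satisfy the generalized Dolan–Grady relations [𝐞_i, [𝐞_i, 𝐞_j]] = 𝐞_j for all adjacent pairs i ≠ j in the affine A_2 Dynkin diagram (where all three nodes are mutually adjacent). -/
open LaurentPolynomial

/-- `e_{ij}^{(n)} = E_{ij} t^n` in the loop algebra of `sl_3 ⊂ gl_3` (0-based indices). -/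
noncomputable def loopE3 (i j : Fin 3) (n : ℤ) :
    Matrix (Fin 3) (Fin 3) (LaurentPolynomial ℂ) :=
  Matrix.single i j (T n)

/-- `B_{ij}^{(n)} = e_{ij}^{(n)} + (-1)^{i+j+1+3n} e_{ji}^{(-n)}` (the sign with 0-based
indices has the same parity as with the 1-based convention of the paper). -/
noncomputable def loopB3 (i j : Fin 3) (n : ℤ) :
    Matrix (Fin 3) (Fin 3) (LaurentPolynomial ℂ) :=
  loopE3 i j n + ((-1 : ℂ) ^ ((i : ℕ) + (j : ℕ) + 1 + 3 * n)) • loopE3 j i (-n)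

/-! Each of `𝐞_1, 𝐞_2, 𝐞_3` has the form `u E_ab + v E_ba` with `u v = 1` (the signs in `B` are
all `+1` here), and any two of them share exactly one index. For `X = u E_ab + v E_ba` and
`Y = p E_bc + q E_cb` with `a, b, c` distinct one computes `[X, Y] = u p E_ac - q v E_ca`, and
bracketing once more with `X` gives back `u v Y`. -/

namespace Matrix

variable {n R : Type*} [DecidableEq n]

def singlePair [AddZeroClass R] (a b : n) (u v : R) : Matrix n n R :=
  single a b u + single b a v

theorem singlePair_comm [AddCommMonoid R] (a b : n) (u v : R) :
    singlePair a b u v = singlePair b a v u :=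
  add_comm _ _

theorem smul_singlePair [Semiring R] (r : R) (a b : n) (u v : R) :
    r • singlePair a b u v = singlePair a b (r * u) (r * v) := by
  simp only [singlePair, smul_add, smul_single, smul_eq_mul]

theorem lie_singlePair_singlePair [Fintype n] [Ring R] {a b c : n} (hab : a ≠ b) (hac : a ≠ c)
    (hbc : b ≠ c) (u v p q : R) :
    ⁅singlePair a b u v, singlePair b c p q⁆ = singlePair a c (u * p) (-(q * v)) := by
  simp [singlePair, Ring.lie_def, add_mul, mul_add, hab, hac, hbc, hab.symm, hac.symm, hbc.symm,
    sub_eq_add_neg, single_neg]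

theorem lie_singlePair_lie_singlePair [Fintype n] [CommRing R] {a b c : n} (hab : a ≠ b)
    (hac : a ≠ c) (hbc : b ≠ c) (u v p q : R) :
    ⁅singlePair a b u v, ⁅singlePair a b u v, singlePair b c p q⁆⁆ =
      (u * v) • singlePair b c p q := by
  rw [lie_singlePair_singlePair hab hac hbc, singlePair_comm a b,
    lie_singlePair_singlePair hab.symm hbc hac, smul_singlePair]
  congr 1 <;> ring

end Matrix

open Matrix

theorem loopB3_eq_singlePair {i j : Fin 3} {n : ℤ} (h : Even ((i : ℕ) + (j : ℕ) + 1 + 3 * n)) :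
    loopB3 i j n = singlePair i j (T n) (T (-n)) := by
  rw [loopB3, loopE3, loopE3, h.neg_one_zpow, one_smul, singlePair]

/-- In the `θ₁`-fixed subalgebra of `sl_3[t,t⁻¹]`, the elements
`𝐞_1 = A_{12}^{(0)}`, `𝐞_2 = A_{23}^{(0)}`, `𝐞_3 = A_{13}^{(-1)}` satisfy the
generalized Dolan–Grady relations `[𝐞_i, [𝐞_i, 𝐞_j]] = 𝐞_j` for all `i ≠ j`
(all three nodes of the affine `A_2` Dynkin diagram are mutually adjacent). -/
theorem stmt6 (E : Fin 3 → Matrix (Fin 3) (Fin 3) (LaurentPolynomial ℂ))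
    (hE1 : E 0 = loopB3 0 1 0) (hE2 : E 1 = loopB3 1 2 0)
    (hE3 : E 2 = loopB3 0 2 (-1)) :
    ∀ i j : Fin 3, i ≠ j → ⁅E i, ⁅E i, E j⁆⁆ = E j := by
  have dolanGrady {a b c : Fin 3} {u v : ℂ[T;T⁻¹]} (p q : ℂ[T;T⁻¹])
      (hab : a ≠ b := by decide) (hac : a ≠ c := by decide) (hbc : b ≠ c := by decide)
      (huv : u * v = 1 := by rw [← T_add]; norm_num) :
      ⁅singlePair a b u v, ⁅singlePair a b u v, singlePair b c p q⁆⁆ = singlePair b c p q := by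
    rw [lie_singlePair_lie_singlePair hab hac hbc, huv, one_smul]
  rw [loopB3_eq_singlePair (by decide)] at hE1 hE2 hE3
  intro i j hij
  -- orient both elements so that the shared index is the middle one
  match i, j, hij with
  | 0, 0, h | 1, 1, h | 2, 2, h => exact absurd rfl h
  | 0, 1, _ => rw [hE1, hE2]; exact dolanGrady _ _
  | 0, 2, _ => rw [hE1, hE3, singlePair_comm 0 1]; exact dolanGrady _ _
  | 1, 0, _ => rw [hE2, hE1, singlePair_comm 1 2, singlePair_comm 0 1]; exact dolanGrady _ _
  | 1, 2, _ => rw [hE2, hE3, singlePair_comm 0 2]; exact dolanGrady _ _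
  | 2, 0, _ => rw [hE3, hE1, singlePair_comm 0 2]; exact dolanGrady _ _
  | 2, 1, _ => rw [hE3, hE2, singlePair_comm 1 2]; exact dolanGrady _ _
end

section
/- In a Lie algebra satisfying the sl_3-Askey–Wilson relations [𝐞_i,𝐞_j] = ε_{ijk} 𝐟_k, [𝐞_i,𝐟_j] = δ_{ij} 𝐠_i − ε_{ijk} 𝐞_k, [𝐟_i,𝐟_j] = ε_{ijk}(𝐟_k − α 𝐞_k), the cubic relation [[𝐞_i,𝐞_j],[𝐞_j,𝐞_k]] + [𝐞_i,𝐞_k] + α ε_{ijk} 𝐞_j = 0 holds for all pairwise distinct 1 ≤ i,j,k ≤ 3. -/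
/-- The Levi-Civita symbol `ε_{ijk}` on `{0,1,2}` (0-based indices). -/
def eps (i j k : Fin 3) : ℂ :=
  if (i, j, k) = (0, 1, 2) ∨ (i, j, k) = (1, 2, 0) ∨ (i, j, k) = (2, 0, 1) then 1
  else if (i, j, k) = (0, 2, 1) ∨ (i, j, k) = (2, 1, 0) ∨ (i, j, k) = (1, 0, 2) then -1
  else 0

lemma eps_000 : eps 0 0 0 = 0 := rfl
lemma eps_001 : eps 0 0 1 = 0 := rfl
lemma eps_002 : eps 0 0 2 = 0 := rfl
lemma eps_010 : eps 0 1 0 = 0 := rfl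
lemma eps_011 : eps 0 1 1 = 0 := rfl
lemma eps_012 : eps 0 1 2 = 1 := rfl
lemma eps_020 : eps 0 2 0 = 0 := rfl
lemma eps_021 : eps 0 2 1 = -1 := rfl
lemma eps_022 : eps 0 2 2 = 0 := rfl
lemma eps_100 : eps 1 0 0 = 0 := rfl
lemma eps_101 : eps 1 0 1 = 0 := rfl
lemma eps_102 : eps 1 0 2 = -1 := rfl
lemma eps_110 : eps 1 1 0 = 0 := rfl
lemma eps_111 : eps 1 1 1 = 0 := rfl
lemma eps_112 : eps 1 1 2 = 0 := rfl
lemma eps_120 : eps 1 2 0 = 1 := rfl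
lemma eps_121 : eps 1 2 1 = 0 := rfl
lemma eps_122 : eps 1 2 2 = 0 := rfl
lemma eps_200 : eps 2 0 0 = 0 := rfl
lemma eps_201 : eps 2 0 1 = 1 := rfl
lemma eps_202 : eps 2 0 2 = 0 := rfl
lemma eps_210 : eps 2 1 0 = -1 := rfl
lemma eps_211 : eps 2 1 1 = 0 := rfl
lemma eps_212 : eps 2 1 2 = 0 := rfl
lemma eps_220 : eps 2 2 0 = 0 := rfl
lemma eps_221 : eps 2 2 1 = 0 := rfl
lemma eps_222 : eps 2 2 2 = 0 := rfl


lemma key012 {L : Type*} [LieRing L] [LieAlgebra ℂ L] (α : ℂ)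
    (E F : Fin 3 → L)
    (hee : ∀ i j : Fin 3, ⁅E i, E j⁆ = ∑ k : Fin 3, eps i j k • F k)
    (hff : ∀ i j : Fin 3, ⁅F i, F j⁆ = ∑ k : Fin 3, eps i j k • (F k - α • E k)) :
      ⁅⁅E 0, E 1⁆, ⁅E 1, E 2⁆⁆ + ⁅E 0, E 2⁆ + (α * eps 0 1 2) • E 1 = 0 := by
  simp only [hee, hff, Fin.sum_univ_three, eps_000, eps_001, eps_002, eps_010, eps_011, eps_012, eps_020, eps_021, eps_022, eps_100, eps_101, eps_102, eps_110, eps_111, eps_112, eps_120, eps_121, eps_122, eps_200, eps_201, eps_202, eps_210, eps_211, eps_212, eps_220, eps_221, eps_222,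
    zero_smul, one_smul, neg_smul, smul_zero, zero_add, add_zero, neg_zero,
    lie_smul, smul_lie, neg_lie, lie_neg, lie_self, smul_neg, neg_neg, smul_sub, smul_add, smul_smul]
  module

lemma key021 {L : Type*} [LieRing L] [LieAlgebra ℂ L] (α : ℂ)
    (E F : Fin 3 → L)
    (hee : ∀ i j : Fin 3, ⁅E i, E j⁆ = ∑ k : Fin 3, eps i j k • F k)
    (hff : ∀ i j : Fin 3, ⁅F i, F j⁆ = ∑ k : Fin 3, eps i j k • (F k - α • E k)) :
      ⁅⁅E 0, E 2⁆, ⁅E 2, E 1⁆⁆ + ⁅E 0, E 1⁆ + (α * eps 0 2 1) • E 2 = 0 := by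
  simp only [hee, hff, Fin.sum_univ_three, eps_000, eps_001, eps_002, eps_010, eps_011, eps_012, eps_020, eps_021, eps_022, eps_100, eps_101, eps_102, eps_110, eps_111, eps_112, eps_120, eps_121, eps_122, eps_200, eps_201, eps_202, eps_210, eps_211, eps_212, eps_220, eps_221, eps_222,
    zero_smul, one_smul, neg_smul, smul_zero, zero_add, add_zero, neg_zero,
    lie_smul, smul_lie, neg_lie, lie_neg, lie_self, smul_neg, neg_neg, smul_sub, smul_add, smul_smul]
  module

lemma key102 {L : Type*} [LieRing L] [LieAlgebra ℂ L] (α : ℂ)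
    (E F : Fin 3 → L)
    (hee : ∀ i j : Fin 3, ⁅E i, E j⁆ = ∑ k : Fin 3, eps i j k • F k)
    (hff : ∀ i j : Fin 3, ⁅F i, F j⁆ = ∑ k : Fin 3, eps i j k • (F k - α • E k)) :
      ⁅⁅E 1, E 0⁆, ⁅E 0, E 2⁆⁆ + ⁅E 1, E 2⁆ + (α * eps 1 0 2) • E 0 = 0 := by
  simp only [hee, hff, Fin.sum_univ_three, eps_000, eps_001, eps_002, eps_010, eps_011, eps_012, eps_020, eps_021, eps_022, eps_100, eps_101, eps_102, eps_110, eps_111, eps_112, eps_120, eps_121, eps_122, eps_200, eps_201, eps_202, eps_210, eps_211, eps_212, eps_220, eps_221, eps_222,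
    zero_smul, one_smul, neg_smul, smul_zero, zero_add, add_zero, neg_zero,
    lie_smul, smul_lie, neg_lie, lie_neg, lie_self, smul_neg, neg_neg, smul_sub, smul_add, smul_smul]
  module

lemma key120 {L : Type*} [LieRing L] [LieAlgebra ℂ L] (α : ℂ)
    (E F : Fin 3 → L)
    (hee : ∀ i j : Fin 3, ⁅E i, E j⁆ = ∑ k : Fin 3, eps i j k • F k)
    (hff : ∀ i j : Fin 3, ⁅F i, F j⁆ = ∑ k : Fin 3, eps i j k • (F k - α • E k)) :
      ⁅⁅E 1, E 2⁆, ⁅E 2, E 0⁆⁆ + ⁅E 1, E 0⁆ + (α * eps 1 2 0) • E 2 = 0 := by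
  simp only [hee, hff, Fin.sum_univ_three, eps_000, eps_001, eps_002, eps_010, eps_011, eps_012, eps_020, eps_021, eps_022, eps_100, eps_101, eps_102, eps_110, eps_111, eps_112, eps_120, eps_121, eps_122, eps_200, eps_201, eps_202, eps_210, eps_211, eps_212, eps_220, eps_221, eps_222,
    zero_smul, one_smul, neg_smul, smul_zero, zero_add, add_zero, neg_zero,
    lie_smul, smul_lie, neg_lie, lie_neg, lie_self, smul_neg, neg_neg, smul_sub, smul_add, smul_smul]
  module

lemma key201 {L : Type*} [LieRing L] [LieAlgebra ℂ L] (α : ℂ)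
    (E F : Fin 3 → L)
    (hee : ∀ i j : Fin 3, ⁅E i, E j⁆ = ∑ k : Fin 3, eps i j k • F k)
    (hff : ∀ i j : Fin 3, ⁅F i, F j⁆ = ∑ k : Fin 3, eps i j k • (F k - α • E k)) :
      ⁅⁅E 2, E 0⁆, ⁅E 0, E 1⁆⁆ + ⁅E 2, E 1⁆ + (α * eps 2 0 1) • E 0 = 0 := by
  simp only [hee, hff, Fin.sum_univ_three, eps_000, eps_001, eps_002, eps_010, eps_011, eps_012, eps_020, eps_021, eps_022, eps_100, eps_101, eps_102, eps_110, eps_111, eps_112, eps_120, eps_121, eps_122, eps_200, eps_201, eps_202, eps_210, eps_211, eps_212, eps_220, eps_221, eps_222,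
    zero_smul, one_smul, neg_smul, smul_zero, zero_add, add_zero, neg_zero,
    lie_smul, smul_lie, neg_lie, lie_neg, lie_self, smul_neg, neg_neg, smul_sub, smul_add, smul_smul]
  module

lemma key210 {L : Type*} [LieRing L] [LieAlgebra ℂ L] (α : ℂ)
    (E F : Fin 3 → L)
    (hee : ∀ i j : Fin 3, ⁅E i, E j⁆ = ∑ k : Fin 3, eps i j k • F k)
    (hff : ∀ i j : Fin 3, ⁅F i, F j⁆ = ∑ k : Fin 3, eps i j k • (F k - α • E k)) :
      ⁅⁅E 2, E 1⁆, ⁅E 1, E 0⁆⁆ + ⁅E 2, E 0⁆ + (α * eps 2 1 0) • E 1 = 0 := by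
  simp only [hee, hff, Fin.sum_univ_three, eps_000, eps_001, eps_002, eps_010, eps_011, eps_012, eps_020, eps_021, eps_022, eps_100, eps_101, eps_102, eps_110, eps_111, eps_112, eps_120, eps_121, eps_122, eps_200, eps_201, eps_202, eps_210, eps_211, eps_212, eps_220, eps_221, eps_222,
    zero_smul, one_smul, neg_smul, smul_zero, zero_add, add_zero, neg_zero,
    lie_smul, smul_lie, neg_lie, lie_neg, lie_self, smul_neg, neg_neg, smul_sub, smul_add, smul_smul]
  module

/-- In a complex Lie algebra satisfying the `sl_3`-Askey–Wilson relations
`[𝐞_i,𝐞_j] = ε_{ijk} 𝐟_k`, `[𝐞_i,𝐟_j] = δ_{ij} 𝐠_i − ε_{ijk} 𝐞_k`,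
`[𝐟_i,𝐟_j] = ε_{ijk}(𝐟_k − α 𝐞_k)` (with `𝐠_3 = −𝐠_1 − 𝐠_2`), the cubic relation
`[[𝐞_i,𝐞_j],[𝐞_j,𝐞_k]] + [𝐞_i,𝐞_k] + α ε_{ijk} 𝐞_j = 0` holds for all pairwise
distinct `i, j, k`. -/
theorem stmt8 {L : Type*} [LieRing L] [LieAlgebra ℂ L] (α : ℂ)
    (E F G : Fin 3 → L) (hG3 : G 2 = -G 0 - G 1)
    (hee : ∀ i j : Fin 3, ⁅E i, E j⁆ = ∑ k : Fin 3, eps i j k • F k)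
    (hef : ∀ i j : Fin 3, ⁅E i, F j⁆ =
      (if i = j then (1 : ℂ) else 0) • G i - ∑ k : Fin 3, eps i j k • E k)
    (hff : ∀ i j : Fin 3, ⁅F i, F j⁆ = ∑ k : Fin 3, eps i j k • (F k - α • E k)) :
    ∀ i j k : Fin 3, i ≠ j → j ≠ k → i ≠ k →
      ⁅⁅E i, E j⁆, ⁅E j, E k⁆⁆ + ⁅E i, E k⁆ + (α * eps i j k) • E j = 0 := by
  intro i j k hij hjk hik
  fin_cases i <;> fin_cases j <;> fin_cases k <;>
    first
    | exact absurd rfl hij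
    | exact absurd rfl hjk
    | exact absurd rfl hik
    | exact key012 α E F hee hff
    | exact key021 α E F hee hff
    | exact key102 α E F hee hff
    | exact key120 α E F hee hff
    | exact key201 α E F hee hff
    | exact key210 α E F hee hff
end

section
/- The classical analog of the Askey–Wilson algebra for sl_3, i.e., the Lie algebra with basis {𝐞_i, 𝐟_i : i=1,2,3} ∪ {𝐠_1, 𝐠_2} and brackets [𝐞_i,𝐞_j] = ε_{ijk}𝐟_k, [𝐞_i,𝐟_j] = δ_{ij}𝐠_i − ε_{ijk}𝐞_k, [𝐞_i,𝐠_j] = α𝐞_i − 2𝐟_i + 3δ_{ij}(2𝐟_i − α𝐞_i), [𝐟_i,𝐟_j] = ε_{ijk}(𝐟_k − α𝐞_k), [𝐟_i,𝐠_j] = −α𝐟_i − 2𝐞_i + 3δ_{ij}(α𝐟_i + 2𝐞_i), [𝐠_1,𝐠_2] = 0 (with 𝐠_3 = −𝐠_1−𝐠_2), satisfies the Jacobi identity, hence defines an 8-dimensional complex Lie algebra for every α ∈ ℂ. -/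
/-- The underlying 8-dimensional complex vector space, with standard basis
`𝐞_1,𝐞_2,𝐞_3,𝐟_1,𝐟_2,𝐟_3,𝐠_1,𝐠_2`. -/
abbrev V8 : Type := Fin 8 → ℂ

/-- Standard basis vector of `V8`. -/
def bV (i : Fin 8) : V8 := Pi.single i 1

/-- The basis vectors `𝐞_1,𝐞_2,𝐞_3`. -/
def eV : Fin 3 → V8 := ![bV 0, bV 1, bV 2]

/-- The basis vectors `𝐟_1,𝐟_2,𝐟_3`. -/
def fV : Fin 3 → V8 := ![bV 3, bV 4, bV 5]

/-- The vectors `𝐠_1,𝐠_2` (basis) and `𝐠_3 = −𝐠_1 − 𝐠_2`. -/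
def gV : Fin 3 → V8 := ![bV 6, bV 7, -bV 6 - bV 7]

open Matrix in
@[simp] lemma cons_val_five {m : ℕ} {β : Type*} (x : β) (u : Fin (m+5) → β) :
    vecCons x u 5 = vecHead (vecTail (vecTail (vecTail (vecTail u)))) := rfl
open Matrix in
@[simp] lemma cons_val_six {m : ℕ} {β : Type*} (x : β) (u : Fin (m+6) → β) :
    vecCons x u 6 = vecHead (vecTail (vecTail (vecTail (vecTail (vecTail u))))) := rfl
open Matrix in
@[simp] lemma cons_val_seven {m : ℕ} {β : Type*} (x : β) (u : Fin (m+7) → β) :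
    vecCons x u 7 = vecHead (vecTail (vecTail (vecTail (vecTail (vecTail (vecTail u)))))) := rfl

/-- constant part of the structure constants -/
def sA : Fin 8 → Fin 8 → Fin 8 → ℤ :=
![![![0, 0, 0, 0, 0, 0, 0, 0], ![0, 0, 0, 0, 0, 1, 0, 0], ![0, 0, 0, 0, -1, 0, 0, 0], ![0, 0, 0, 0, 0, 0, 1, 0], ![0, 0, -1, 0, 0, 0, 0, 0], ![0, 1, 0, 0, 0, 0, 0, 0], ![0, 0, 0, 4, 0, 0, 0, 0], ![0, 0, 0, -2, 0, 0, 0, 0]],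
 ![![0, 0, 0, 0, 0, -1, 0, 0], ![0, 0, 0, 0, 0, 0, 0, 0], ![0, 0, 0, 1, 0, 0, 0, 0], ![0, 0, 1, 0, 0, 0, 0, 0], ![0, 0, 0, 0, 0, 0, 0, 1], ![-1, 0, 0, 0, 0, 0, 0, 0], ![0, 0, 0, 0, -2, 0, 0, 0], ![0, 0, 0, 0, 4, 0, 0, 0]],
 ![![0, 0, 0, 0, 1, 0, 0, 0], ![0, 0, 0, -1, 0, 0, 0, 0], ![0, 0, 0, 0, 0, 0, 0, 0], ![0, -1, 0, 0, 0, 0, 0, 0], ![1, 0, 0, 0, 0, 0, 0, 0], ![0, 0, 0, 0, 0, 0, -1, -1], ![0, 0, 0, 0, 0, -2, 0, 0], ![0, 0, 0, 0, 0, -2, 0, 0]],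
 ![![0, 0, 0, 0, 0, 0, -1, 0], ![0, 0, -1, 0, 0, 0, 0, 0], ![0, 1, 0, 0, 0, 0, 0, 0], ![0, 0, 0, 0, 0, 0, 0, 0], ![0, 0, 0, 0, 0, 1, 0, 0], ![0, 0, 0, 0, -1, 0, 0, 0], ![4, 0, 0, 0, 0, 0, 0, 0], ![-2, 0, 0, 0, 0, 0, 0, 0]],
 ![![0, 0, 1, 0, 0, 0, 0, 0], ![0, 0, 0, 0, 0, 0, 0, -1], ![-1, 0, 0, 0, 0, 0, 0, 0], ![0, 0, 0, 0, 0, -1, 0, 0], ![0, 0, 0, 0, 0, 0, 0, 0], ![0, 0, 0, 1, 0, 0, 0, 0], ![0, -2, 0, 0, 0, 0, 0, 0], ![0, 4, 0, 0, 0, 0, 0, 0]],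
 ![![0, -1, 0, 0, 0, 0, 0, 0], ![1, 0, 0, 0, 0, 0, 0, 0], ![0, 0, 0, 0, 0, 0, 1, 1], ![0, 0, 0, 0, 1, 0, 0, 0], ![0, 0, 0, -1, 0, 0, 0, 0], ![0, 0, 0, 0, 0, 0, 0, 0], ![0, 0, -2, 0, 0, 0, 0, 0], ![0, 0, -2, 0, 0, 0, 0, 0]],
 ![![0, 0, 0, -4, 0, 0, 0, 0], ![0, 0, 0, 0, 2, 0, 0, 0], ![0, 0, 0, 0, 0, 2, 0, 0], ![-4, 0, 0, 0, 0, 0, 0, 0], ![0, 2, 0, 0, 0, 0, 0, 0], ![0, 0, 2, 0, 0, 0, 0, 0], ![0, 0, 0, 0, 0, 0, 0, 0], ![0, 0, 0, 0, 0, 0, 0, 0]],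
 ![![0, 0, 0, 2, 0, 0, 0, 0], ![0, 0, 0, 0, -4, 0, 0, 0], ![0, 0, 0, 0, 0, 2, 0, 0], ![2, 0, 0, 0, 0, 0, 0, 0], ![0, -4, 0, 0, 0, 0, 0, 0], ![0, 0, 2, 0, 0, 0, 0, 0], ![0, 0, 0, 0, 0, 0, 0, 0], ![0, 0, 0, 0, 0, 0, 0, 0]]]

/-- α-linear part of the structure constants -/
def sB : Fin 8 → Fin 8 → Fin 8 → ℤ :=
![![![0, 0, 0, 0, 0, 0, 0, 0], ![0, 0, 0, 0, 0, 0, 0, 0], ![0, 0, 0, 0, 0, 0, 0, 0], ![0, 0, 0, 0, 0, 0, 0, 0], ![0, 0, 0, 0, 0, 0, 0, 0], ![0, 0, 0, 0, 0, 0, 0, 0], ![-2, 0, 0, 0, 0, 0, 0, 0], ![1, 0, 0, 0, 0, 0, 0, 0]],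
 ![![0, 0, 0, 0, 0, 0, 0, 0], ![0, 0, 0, 0, 0, 0, 0, 0], ![0, 0, 0, 0, 0, 0, 0, 0], ![0, 0, 0, 0, 0, 0, 0, 0], ![0, 0, 0, 0, 0, 0, 0, 0], ![0, 0, 0, 0, 0, 0, 0, 0], ![0, 1, 0, 0, 0, 0, 0, 0], ![0, -2, 0, 0, 0, 0, 0, 0]],
 ![![0, 0, 0, 0, 0, 0, 0, 0], ![0, 0, 0, 0, 0, 0, 0, 0], ![0, 0, 0, 0, 0, 0, 0, 0], ![0, 0, 0, 0, 0, 0, 0, 0], ![0, 0, 0, 0, 0, 0, 0, 0], ![0, 0, 0, 0, 0, 0, 0, 0], ![0, 0, 1, 0, 0, 0, 0, 0], ![0, 0, 1, 0, 0, 0, 0, 0]],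
 ![![0, 0, 0, 0, 0, 0, 0, 0], ![0, 0, 0, 0, 0, 0, 0, 0], ![0, 0, 0, 0, 0, 0, 0, 0], ![0, 0, 0, 0, 0, 0, 0, 0], ![0, 0, -1, 0, 0, 0, 0, 0], ![0, 1, 0, 0, 0, 0, 0, 0], ![0, 0, 0, 2, 0, 0, 0, 0], ![0, 0, 0, -1, 0, 0, 0, 0]],
 ![![0, 0, 0, 0, 0, 0, 0, 0], ![0, 0, 0, 0, 0, 0, 0, 0], ![0, 0, 0, 0, 0, 0, 0, 0], ![0, 0, 1, 0, 0, 0, 0, 0], ![0, 0, 0, 0, 0, 0, 0, 0], ![-1, 0, 0, 0, 0, 0, 0, 0], ![0, 0, 0, 0, -1, 0, 0, 0], ![0, 0, 0, 0, 2, 0, 0, 0]],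
 ![![0, 0, 0, 0, 0, 0, 0, 0], ![0, 0, 0, 0, 0, 0, 0, 0], ![0, 0, 0, 0, 0, 0, 0, 0], ![0, -1, 0, 0, 0, 0, 0, 0], ![1, 0, 0, 0, 0, 0, 0, 0], ![0, 0, 0, 0, 0, 0, 0, 0], ![0, 0, 0, 0, 0, -1, 0, 0], ![0, 0, 0, 0, 0, -1, 0, 0]],
 ![![2, 0, 0, 0, 0, 0, 0, 0], ![0, -1, 0, 0, 0, 0, 0, 0], ![0, 0, -1, 0, 0, 0, 0, 0], ![0, 0, 0, -2, 0, 0, 0, 0], ![0, 0, 0, 0, 1, 0, 0, 0], ![0, 0, 0, 0, 0, 1, 0, 0], ![0, 0, 0, 0, 0, 0, 0, 0], ![0, 0, 0, 0, 0, 0, 0, 0]],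
 ![![-1, 0, 0, 0, 0, 0, 0, 0], ![0, 2, 0, 0, 0, 0, 0, 0], ![0, 0, -1, 0, 0, 0, 0, 0], ![0, 0, 0, 1, 0, 0, 0, 0], ![0, 0, 0, 0, -2, 0, 0, 0], ![0, 0, 0, 0, 0, 1, 0, 0], ![0, 0, 0, 0, 0, 0, 0, 0], ![0, 0, 0, 0, 0, 0, 0, 0]]]

def sum8 (f : Fin 8 → ℤ) : ℤ := f 0 + f 1 + f 2 + f 3 + f 4 + f 5 + f 6 + f 7

set_option maxHeartbeats 1000000 in
lemma hanti : ∀ i j l : Fin 8, sA i j l = - sA j i l ∧ sB i j l = - sB j i l := by decide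

set_option maxHeartbeats 4000000 in
lemma hjac0 : ∀ i j k l : Fin 8,
    sum8 (fun m => sA j k m * sA i m l)
      = sum8 (fun m => sA i j m * sA m k l) + sum8 (fun m => sA i k m * sA j m l) := by decide

set_option maxHeartbeats 4000000 in
lemma hjac1 : ∀ i j k l : Fin 8,
    sum8 (fun m => sA j k m * sB i m l + sB j k m * sA i m l)
      = sum8 (fun m => sA i j m * sB m k l + sB i j m * sA m k l)
        + sum8 (fun m => sA i k m * sB j m l + sB i k m * sA j m l) := by decide

set_option maxHeartbeats 4000000 in
lemma hjac2 : ∀ i j k l : Fin 8,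
    sum8 (fun m => sB j k m * sB i m l)
      = sum8 (fun m => sB i j m * sB m k l) + sum8 (fun m => sB i k m * sB j m l) := by decide

noncomputable section

/-- structure constants over ℂ -/
def cc (α : ℂ) (i j l : Fin 8) : ℂ := (sA i j l : ℂ) + (sB i j l : ℂ) * α

lemma cc_anti (α : ℂ) (i j l : Fin 8) : cc α i j l = - cc α j i l := by
  have h := hanti i j l
  rw [cc, cc, h.1, h.2]
  push_cast
  ring

/-- the bracket, as a bilinear map -/
def Bmap (α : ℂ) : V8 →ₗ[ℂ] V8 →ₗ[ℂ] V8 :=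
  LinearMap.mk₂ ℂ (fun u v l => ∑ i, ∑ j, u i * v j * cc α i j l)
    (by intro u u' v; funext l
        simp [add_mul, Finset.sum_add_distrib])
    (by intro a u v; funext l
        simp [Finset.mul_sum, mul_assoc])
    (by intro u v v'; funext l
        simp [mul_add, add_mul, Finset.sum_add_distrib])
    (by intro a u v; funext l
        simp [Finset.mul_sum]; ring_nf; simp [mul_assoc, mul_left_comm])

lemma Bmap_apply (α : ℂ) (u v : V8) (l : Fin 8) :
    Bmap α u v l = ∑ i, ∑ j, u i * v j * cc α i j l := rfl

lemma vsum (v : V8) : v = ∑ i, v i • bV i := by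
  funext l
  simp [bV, Finset.sum_apply, Pi.single_apply]

lemma Bmap_single (α : ℂ) (i j : Fin 8) :
    Bmap α (bV i) (bV j) = fun l => cc α i j l := by
  funext l
  simp [Bmap_apply, bV, Pi.single_apply, ite_mul, mul_ite]

lemma Bmap_single_sum (α : ℂ) (i j : Fin 8) :
    Bmap α (bV i) (bV j) = ∑ m, cc α i j m • bV m := by
  rw [Bmap_single]; exact vsum _

lemma Bmap_single' (α : ℂ) (i j : Fin 8) (l : Fin 8) :
    Bmap α (Pi.single i 1) (Pi.single j 1) l = cc α i j l := by
  have h := Bmap_single α i j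
  simp only [bV] at h
  exact congrFun h l

lemma ccjac (α : ℂ) (i j k l : Fin 8) :
    (∑ m, cc α j k m * cc α i m l)
      = (∑ m, cc α i j m * cc α m k l) + ∑ m, cc α i k m * cc α j m l := by
  have h0 := hjac0 i j k l
  have h1 := hjac1 i j k l
  have h2 := hjac2 i j k l
  have e0 : ((sum8 (fun m => sA j k m * sA i m l) : ℤ) : ℂ)
      = ((sum8 (fun m => sA i j m * sA m k l) + sum8 (fun m => sA i k m * sA j m l) : ℤ) : ℂ) := by
    rw [h0]
  have e1 : ((sum8 (fun m => sA j k m * sB i m l + sB j k m * sA i m l) : ℤ) : ℂ)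
      = ((sum8 (fun m => sA i j m * sB m k l + sB i j m * sA m k l)
          + sum8 (fun m => sA i k m * sB j m l + sB i k m * sA j m l) : ℤ) : ℂ) := by
    rw [h1]
  have e2 : ((sum8 (fun m => sB j k m * sB i m l) : ℤ) : ℂ)
      = ((sum8 (fun m => sB i j m * sB m k l) + sum8 (fun m => sB i k m * sB j m l) : ℤ) : ℂ) := by
    rw [h2]
  simp only [sum8] at e0 e1 e2
  push_cast at e0 e1 e2
  simp only [Fin.sum_univ_eight, cc]
  push_cast
  linear_combination e0 + α * e1 + α ^ 2 * e2

lemma jac_basis (α : ℂ) (i j k : Fin 8) :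
    Bmap α (bV i) (Bmap α (bV j) (bV k))
      = Bmap α (Bmap α (bV i) (bV j)) (bV k) + Bmap α (bV j) (Bmap α (bV i) (bV k)) := by
  rw [Bmap_single_sum α j k, Bmap_single_sum α i j, Bmap_single_sum α i k]
  simp only [map_sum, map_smul, LinearMap.sum_apply, LinearMap.smul_apply, Bmap_single_sum]
  funext l
  simp only [Finset.sum_apply, Pi.add_apply, Pi.smul_apply, smul_eq_mul, Finset.mul_sum,
    bV, Pi.single_apply, mul_ite, mul_one, mul_zero, Finset.sum_ite_eq]
  simp only [Finset.mem_univ, if_true]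
  exact ccjac α i j k l

set_option maxHeartbeats 2000000 in
lemma jac (α : ℂ) (u v w : V8) :
    Bmap α u (Bmap α v w) = Bmap α (Bmap α u v) w + Bmap α v (Bmap α u w) := by
  have key : ∀ a b c : Fin 8 → ℂ,
      Bmap α (∑ i, a i • bV i) (Bmap α (∑ j, b j • bV j) (∑ k, c k • bV k))
        = Bmap α (Bmap α (∑ i, a i • bV i) (∑ j, b j • bV j)) (∑ k, c k • bV k)
          + Bmap α (∑ j, b j • bV j) (Bmap α (∑ i, a i • bV i) (∑ k, c k • bV k)) := by
    intro a b c
    simp only [map_sum, map_smul, LinearMap.sum_apply, LinearMap.smul_apply, Finset.smul_sum,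
      smul_smul]
    have step : (∑ k : Fin 8, ∑ j : Fin 8, ∑ i : Fin 8, (c k * b j * a i) •
          Bmap α (bV i) (Bmap α (bV j) (bV k)))
        = ∑ k : Fin 8, ∑ j : Fin 8, ∑ i : Fin 8,
            ((c k * b j * a i) • Bmap α (Bmap α (bV i) (bV j)) (bV k)
              + (c k * b j * a i) • Bmap α (bV j) (Bmap α (bV i) (bV k))) :=
      Finset.sum_congr rfl fun k _ => Finset.sum_congr rfl fun j _ =>
        Finset.sum_congr rfl fun i _ => by rw [jac_basis, smul_add]
    rw [step]
    simp only [Finset.sum_add_distrib]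
    congr 1
    · simp only [mul_assoc]
    · refine Finset.sum_congr rfl fun k _ => ?_
      rw [Finset.sum_comm]
      exact Finset.sum_congr rfl fun i _ => Finset.sum_congr rfl fun j _ => by
        rw [mul_right_comm]
  have h := key u v w
  rw [← vsum u, ← vsum v, ← vsum w] at h
  exact h

lemma alt (α : ℂ) (v : V8) : Bmap α v v = 0 := by
  funext l
  show (∑ i, ∑ j, v i * v j * cc α i j l) = 0
  have h : (∑ i, ∑ j, v i * v j * cc α i j l) = - ∑ i, ∑ j, v i * v j * cc α i j l := by
    calc (∑ i, ∑ j, v i * v j * cc α i j l)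
        = ∑ j, ∑ i, v i * v j * cc α i j l := Finset.sum_comm
      _ = ∑ j, ∑ i, -(v j * v i * cc α j i l) := by
          apply Finset.sum_congr rfl; intro j _
          apply Finset.sum_congr rfl; intro i _
          rw [cc_anti α i j l]; ring
      _ = - ∑ i, ∑ j, v i * v j * cc α i j l := by simp
  linear_combination h / 2

end

set_option maxHeartbeats 12000000 in
/-- For every `α ∈ ℂ`, the bilinear antisymmetric bracket on the 8-dimensional
space with basis `{𝐞_i, 𝐟_i : i=1,2,3} ∪ {𝐠_1, 𝐠_2}` (and `𝐠_3 = −𝐠_1−𝐠_2`)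
defined by `[𝐞_i,𝐞_j] = ε_{ijk}𝐟_k`, `[𝐞_i,𝐟_j] = δ_{ij}𝐠_i − ε_{ijk}𝐞_k`,
`[𝐞_i,𝐠_j] = α𝐞_i − 2𝐟_i + 3δ_{ij}(2𝐟_i − α𝐞_i)`,
`[𝐟_i,𝐟_j] = ε_{ijk}(𝐟_k − α𝐞_k)`,
`[𝐟_i,𝐠_j] = −α𝐟_i − 2𝐞_i + 3δ_{ij}(α𝐟_i + 2𝐞_i)`, `[𝐠_1,𝐠_2] = 0`
satisfies alternation and the Jacobi identity, hence defines an 8-dimensional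
complex Lie algebra (the classical `sl_3`-Askey–Wilson algebra). -/
theorem stmt18 (α : ℂ) :
    Module.finrank ℂ V8 = 8 ∧
    ∃ B : V8 →ₗ[ℂ] V8 →ₗ[ℂ] V8,
      (∀ v : V8, B v v = 0) ∧
      (∀ u v w : V8, B u (B v w) = B (B u v) w + B v (B u w)) ∧
      (∀ i j : Fin 3, B (eV i) (eV j) = ∑ k : Fin 3, eps i j k • fV k) ∧
      (∀ i j : Fin 3, B (eV i) (fV j) =
        (if i = j then (1 : ℂ) else 0) • gV i - ∑ k : Fin 3, eps i j k • eV k) ∧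
      (∀ i j : Fin 3, B (eV i) (gV j) =
        α • eV i - (2 : ℂ) • fV i
          + (if i = j then (3 : ℂ) else 0) • ((2 : ℂ) • fV i - α • eV i)) ∧
      (∀ i j : Fin 3, B (fV i) (fV j) = ∑ k : Fin 3, eps i j k • (fV k - α • eV k)) ∧
      (∀ i j : Fin 3, B (fV i) (gV j) =
        -(α • fV i) - (2 : ℂ) • eV i
          + (if i = j then (3 : ℂ) else 0) • (α • fV i + (2 : ℂ) • eV i)) ∧
      B (gV 0) (gV 1) = 0 := by

  refine ⟨?_, Bmap α, alt α, jac α, ?_, ?_, ?_, ?_, ?_, ?_⟩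
  · simp [V8]
  · intro i j
    fin_cases i <;> fin_cases j <;>
      · simp only [eV, fV, Matrix.cons_val_zero, Matrix.cons_val_one, Matrix.cons_val_two,
          Matrix.head_cons, Matrix.tail_cons, Bmap_single]
        funext l
        fin_cases l <;>
          · simp (config := { decide := true }) [Bmap_single', cc, sA, sB, eps, bV,
              Pi.single_apply, Fin.sum_univ_three, Matrix.vecHead, Matrix.vecTail,
              map_sub, map_neg]
            try norm_num
            try ring
  · intro i j
    fin_cases i <;> fin_cases j <;>
      · simp only [eV, fV, gV, Matrix.cons_val_zero, Matrix.cons_val_one, Matrix.cons_val_two,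
          Matrix.head_cons, Matrix.tail_cons, Bmap_single]
        funext l
        fin_cases l <;>
          · simp (config := { decide := true }) [Bmap_single', cc, sA, sB, eps, bV,
              Pi.single_apply, Fin.sum_univ_three, Matrix.vecHead, Matrix.vecTail,
              map_sub, map_neg]
            try norm_num
            try ring
  · intro i j
    fin_cases i <;> fin_cases j <;>
      · simp only [eV, fV, gV, Matrix.cons_val_zero, Matrix.cons_val_one, Matrix.cons_val_two,
          Matrix.head_cons, Matrix.tail_cons, map_sub, map_neg, Bmap_single]
        funext l
        fin_cases l <;>
          · simp (config := { decide := true }) [Bmap_single', cc, sA, sB, eps, bV,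
              Pi.single_apply, Fin.sum_univ_three, Matrix.vecHead, Matrix.vecTail,
              map_sub, map_neg]
            try norm_num
            try ring
  · intro i j
    fin_cases i <;> fin_cases j <;>
      · simp only [eV, fV, Matrix.cons_val_zero, Matrix.cons_val_one, Matrix.cons_val_two,
          Matrix.head_cons, Matrix.tail_cons, Bmap_single]
        funext l
        fin_cases l <;>
          · simp (config := { decide := true }) [Bmap_single', cc, sA, sB, eps, bV,
              Pi.single_apply, Fin.sum_univ_three, Matrix.vecHead, Matrix.vecTail,
              map_sub, map_neg]
            try norm_num
            try ring
  · intro i j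
    fin_cases i <;> fin_cases j <;>
      · simp only [eV, fV, gV, Matrix.cons_val_zero, Matrix.cons_val_one, Matrix.cons_val_two,
          Matrix.head_cons, Matrix.tail_cons, map_sub, map_neg, Bmap_single]
        funext l
        fin_cases l <;>
          · simp (config := { decide := true }) [Bmap_single', cc, sA, sB, eps, bV,
              Pi.single_apply, Fin.sum_univ_three, Matrix.vecHead, Matrix.vecTail,
              map_sub, map_neg]
            try norm_num
            try ring
  · simp only [gV, Matrix.cons_val_zero, Matrix.cons_val_one, Matrix.head_cons, Bmap_single]
    funext l
    fin_cases l <;>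
      · simp (config := { decide := true }) [Bmap_single', cc, sA, sB, bV,
          Matrix.vecHead, Matrix.vecTail]
        try norm_num
end
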